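/- Let Φ = (G, 𝕋, φ) be a complex unit gain graph whose underlying graph G has no isolated vertices. If 𝓔(Φ) = 2μ(G), then G has a perfect matching. -/

import Mathlib

open Matrix

variable {V : Type*}

/-- A gain function on `G` with values in the circle group `𝕋 ⊆ ℂ`:
each ordered pair of adjacent vertices gets a unit complex number, and
reversing the pair inverts the gain. -/
structure IsGain (G : SimpleGraph V) (φ : V → V → ℂ) : Prop where
  unit : ∀ u v, G.Adj u v → ‖φ u v‖ = 1
  inv : ∀ u v, G.Adj u v → φ v u = (φ u v)⁻¹

/-- The adjacency matrix of the complex unit gain graph `(G, 𝕋, φ)`. -/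
noncomputable def gainAdj (G : SimpleGraph V) (φ : V → V → ℂ) : Matrix V V ℂ :=
  fun u v => @ite _ (G.Adj u v) (Classical.dec _) (φ u v) 0

theorem IsGain.isHermitian {G : SimpleGraph V} {φ : V → V → ℂ} (hg : IsGain G φ) :
    (gainAdj G φ).IsHermitian := by
  ext u v
  simp only [conjTranspose_apply, gainAdj]
  by_cases h : G.Adj u v
  · rw [if_pos h.symm, if_pos h, hg.inv u v h, Complex.inv_eq_conj (hg.unit u v h)]
    simp
  · rw [if_neg (fun h' => h h'.symm), if_neg h]
    simp

/-- The energy of a complex unit gain graph: the sum of the absolute values of the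
eigenvalues of its (Hermitian) adjacency matrix. -/
noncomputable def gainEnergy [Fintype V] [DecidableEq V] (G : SimpleGraph V) (φ : V → V → ℂ)
    (hg : IsGain G φ) : ℝ :=
  ∑ i, |hg.isHermitian.eigenvalues i|

/-- `M` is a matching of `G`: a set of edges of `G`, pairwise sharing no vertex. -/
def IsGraphMatching (G : SimpleGraph V) (M : Finset (Sym2 V)) : Prop :=
  (↑M : Set (Sym2 V)) ⊆ G.edgeSet ∧
    ∀ e ∈ M, ∀ f ∈ M, e ≠ f → ∀ v : V, v ∈ e → v ∉ f

/-- The matching number of `G`: the largest size of a matching. -/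
noncomputable def matchingNumber (G : SimpleGraph V) : ℕ :=
  sSup {n | ∃ M : Finset (Sym2 V), IsGraphMatching G M ∧ M.card = n}

/-- The gain of a walk: the product of the gains along its darts. -/
def walkGain {G : SimpleGraph V} (φ : V → V → ℂ) {u v : V} (w : G.Walk u v) : ℂ :=
  (w.darts.map fun d => φ d.toProd.1 d.toProd.2).prod

/-- A complex unit gain graph is balanced if every cycle has gain `1`. -/
def IsBalanced (G : SimpleGraph V) (φ : V → V → ℂ) : Prop :=
  ∀ (v : V) (w : G.Walk v v), w.IsCycle → walkGain φ w = 1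

theorem IsGain.anti {G H : SimpleGraph V} {φ : V → V → ℂ} (hg : IsGain G φ) (hle : H ≤ G) :
    IsGain H φ :=
  ⟨fun u v h => hg.unit u v (hle h), fun u v h => hg.inv u v (hle h)⟩

theorem IsGain.induce {G : SimpleGraph V} {φ : V → V → ℂ} (hg : IsGain G φ) (s : Set V) :
    IsGain (G.induce s) (fun a b => φ a b) :=
  ⟨fun u v h => hg.unit u v h, fun u v h => hg.inv u v h⟩

/-!
Take a maximum matching `M`. If a vertex `v` is missed by `M`, it has a neighbour `u`, which
maximality forces to be matched, say by `uw ∈ M`. The energy is the trace norm of `A = A(Φ)`, so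
`𝓔(Φ) ≥ Re tr (A B)` for every `B` with `|x* B x| ≤ ‖x‖²`. Testing this against
`B = (E_vu + E_uw) / √2 + ∑_{f ∈ M - uw} E_f`, where `E_f` is the part of `A` carried by the edge
`f`, gives `𝓔(Φ) ≥ 2√2 + 2 (μ(G) - 1) > 2 μ(G)`.
-/

open Matrix Finset

namespace Matrix

variable {𝕜 n : Type*} [RCLike 𝕜] [Fintype n]

lemma star_dotProduct_single_mulVec {α : Type*} [NonUnitalNonAssocSemiring α] [Star α]
    [DecidableEq n] (x : n → α) (p q : n) (c : α) :
    star x ⬝ᵥ single p q c *ᵥ x = star (x p) * (c * x q) := by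
  rw [single_mulVec, ← Pi.single, dotProduct_single, Pi.star_apply]

lemma trace_eq_sum_star_dotProduct_mulVec [DecidableEq n] (M : Matrix n n 𝕜) {U : Matrix n n 𝕜}
    (hU : U ∈ unitaryGroup n 𝕜) :
    M.trace = ∑ i, star (Uᵀ i) ⬝ᵥ M *ᵥ Uᵀ i := by
  have hconj : M.trace = (star U * M * U).trace := by
    rw [trace_mul_cycle, mem_unitaryGroup_iff.mp hU, one_mul]
  rw [hconj]
  simp only [trace, diag, mul_apply, dotProduct, mulVec, transpose_apply, Finset.mul_sum,
    Finset.sum_mul, star_apply, Pi.star_apply]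
  refine sum_congr rfl fun i _ => ?_
  rw [Finset.sum_comm]
  simp only [mul_assoc, mul_comm, mul_left_comm]

def QuadFormDominated (B : Matrix n n 𝕜) (S : Finset n) : Prop :=
  ∀ x : n → 𝕜, ‖star x ⬝ᵥ B *ᵥ x‖ ≤ ∑ z ∈ S, ‖x z‖ ^ 2

namespace QuadFormDominated

variable {B C : Matrix n n 𝕜} {S T : Finset n}

lemma mono (hB : B.QuadFormDominated S) (hST : S ⊆ T) : B.QuadFormDominated T := fun x =>
  (hB x).trans (sum_le_sum_of_subset_of_nonneg hST fun _ _ _ => by positivity)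

lemma add [DecidableEq n] (hB : B.QuadFormDominated S) (hC : C.QuadFormDominated T)
    (hST : Disjoint S T) : (B + C).QuadFormDominated (S ∪ T) := fun x => by
  rw [add_mulVec, dotProduct_add, sum_union hST]
  exact (norm_add_le _ _).trans (add_le_add (hB x) (hC x))

lemma sum [DecidableEq n] {ι : Type*} {s : Finset ι} {B : ι → Matrix n n 𝕜} {S : ι → Finset n}
    (hB : ∀ i ∈ s, (B i).QuadFormDominated (S i)) (hS : (s : Set ι).PairwiseDisjoint S) :
    (∑ i ∈ s, B i).QuadFormDominated (s.biUnion S) := fun x => by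
  rw [sum_mulVec, dotProduct_sum, sum_biUnion hS]
  exact (norm_sum_le _ _).trans (sum_le_sum fun i hi => hB i hi x)

end QuadFormDominated

/-- The easy half of the duality between the trace norm and the numerical radius. -/
theorem IsHermitian.re_trace_mul_le_sum_abs_eigenvalues [DecidableEq n] {A B : Matrix n n 𝕜}
    (hA : A.IsHermitian) (hB : B.QuadFormDominated univ) :
    RCLike.re (A * B).trace ≤ ∑ i, |hA.eigenvalues i| := by
  set b := hA.eigenvectorBasis
  have hquad (i : n) : ‖star ⇑(b i) ⬝ᵥ B *ᵥ ⇑(b i)‖ ≤ 1 := by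
    simpa [← EuclideanSpace.norm_sq_eq, b.norm_eq_one] using hB (b i)
  have htrace : (A * B).trace =
      ∑ i, (hA.eigenvalues i : 𝕜) * (star ⇑(b i) ⬝ᵥ B *ᵥ ⇑(b i)) := by
    rw [trace_mul_comm, trace_eq_sum_star_dotProduct_mulVec _ hA.eigenvectorUnitary.2]
    refine sum_congr rfl fun i _ => ?_
    rw [eigenvectorUnitary_transpose_apply, ← mulVec_mulVec, hA.mulVec_eigenvectorBasis,
      mulVec_smul, dotProduct_smul, RCLike.real_smul_eq_coe_mul]
  rw [htrace, map_sum]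
  refine sum_le_sum fun i _ => ?_
  rw [RCLike.re_ofReal_mul]
  set q := star ⇑(b i) ⬝ᵥ B *ᵥ ⇑(b i)
  calc hA.eigenvalues i * RCLike.re q ≤ |hA.eigenvalues i| * |RCLike.re q| := by
        rw [← abs_mul]; exact le_abs_self _
    _ ≤ |hA.eigenvalues i| * ‖q‖ :=
        mul_le_mul_of_nonneg_left (RCLike.abs_re_le_norm q) (abs_nonneg _)
    _ ≤ |hA.eigenvalues i| := mul_le_of_le_one_right (abs_nonneg _) (hquad i)

end Matrix

lemma two_mul_add_mul_le_sqrt_two_mul (a b c : ℝ) :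
    2 * (a * b + b * c) ≤ √2 * (a ^ 2 + b ^ 2 + c ^ 2) := by
  have hsq : √2 ^ 2 = 2 := Real.sq_sqrt zero_le_two
  have hsos : √2 * (√2 * (a ^ 2 + b ^ 2 + c ^ 2) - 2 * (a * b + b * c)) =
      (√2 * b - a - c) ^ 2 + (a - c) ^ 2 := by
    linear_combination (a ^ 2 + c ^ 2) * hsq
  have hnonneg : 0 ≤ √2 * (√2 * (a ^ 2 + b ^ 2 + c ^ 2) - 2 * (a * b + b * c)) := by
    rw [hsos]; positivity
  linarith [(mul_nonneg_iff_of_pos_left (by positivity : (0 : ℝ) < √2)).mp hnonneg]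

section GainGraph

variable {G : SimpleGraph V} {φ : V → V → ℂ}

lemma IsGain.mul_eq_one (hg : IsGain G φ) {p q : V} (h : G.Adj p q) : φ p q * φ q p = 1 := by
  rw [hg.inv p q h]
  exact mul_inv_cancel₀ (norm_ne_zero_iff.mp (by rw [hg.unit p q h]; exact one_ne_zero))

variable [DecidableEq V]

noncomputable def gainEdgeMatrix (φ : V → V → ℂ) : Sym2 V → Matrix V V ℂ :=
  Sym2.lift ⟨fun p q => single p q (φ p q) + single q p (φ q p), fun _ _ => add_comm _ _⟩

@[simp]
lemma gainEdgeMatrix_mk (φ : V → V → ℂ) (p q : V) :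
    gainEdgeMatrix φ s(p, q) = single p q (φ p q) + single q p (φ q p) :=
  rfl

lemma trace_gainAdj_mul_gainEdgeMatrix [Fintype V] (hg : IsGain G φ) {e : Sym2 V}
    (he : e ∈ G.edgeSet) : (gainAdj G φ * gainEdgeMatrix φ e).trace = 2 := by
  induction e using Sym2.ind with | h p q => ?_
  have h : G.Adj p q := he
  have hqp : gainAdj G φ q p = φ q p := if_pos h.symm
  have hpq : gainAdj G φ p q = φ p q := if_pos h
  rw [gainEdgeMatrix_mk, mul_add, trace_add, trace_mul_single, trace_mul_single, hqp, hpq,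
    op_smul_eq_mul, op_smul_eq_mul, hg.mul_eq_one h, mul_comm, hg.mul_eq_one h, one_add_one_eq_two]

lemma norm_quadForm_gainEdgeMatrix_le [Fintype V] (hg : IsGain G φ) {p q : V} (h : G.Adj p q)
    (x : V → ℂ) : ‖star x ⬝ᵥ gainEdgeMatrix φ s(p, q) *ᵥ x‖ ≤ 2 * ‖x p‖ * ‖x q‖ := by
  rw [gainEdgeMatrix_mk, add_mulVec, dotProduct_add, star_dotProduct_single_mulVec,
    star_dotProduct_single_mulVec]
  refine (norm_add_le _ _).trans_eq ?_
  simp only [norm_mul, norm_star, hg.unit p q h, hg.unit q p h.symm]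
  ring

lemma quadFormDominated_gainEdgeMatrix [Fintype V] (hg : IsGain G φ) {e : Sym2 V}
    (he : e ∈ G.edgeSet) : (gainEdgeMatrix φ e).QuadFormDominated e.toFinset := by
  induction e using Sym2.ind with | h p q => ?_
  have h : G.Adj p q := he
  intro x
  rw [Sym2.toFinset_mk_eq, sum_pair h.ne]
  nlinarith [norm_quadForm_gainEdgeMatrix_le hg h x, sq_nonneg (‖x p‖ - ‖x q‖)]

/-- The weight `1 / √2` is the reciprocal of the spectral radius of the path on three vertices. -/
noncomputable def gainPathMatrix (φ : V → V → ℂ) (v u w : V) : Matrix V V ℂ :=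
  ((√2 : ℝ) : ℂ)⁻¹ • (gainEdgeMatrix φ s(v, u) + gainEdgeMatrix φ s(u, w))

lemma trace_gainAdj_mul_gainPathMatrix [Fintype V] (hg : IsGain G φ) {v u w : V}
    (hvu : G.Adj v u) (huw : G.Adj u w) :
    (gainAdj G φ * gainPathMatrix φ v u w).trace = ((2 * √2 : ℝ) : ℂ) := by
  have hweight : (√2)⁻¹ * 4 = 2 * √2 := by
    rw [inv_mul_eq_div, div_eq_iff (by positivity)]
    linear_combination -2 * Real.mul_self_sqrt (zero_le_two (α := ℝ))
  rw [gainPathMatrix, Matrix.mul_smul, trace_smul, mul_add, trace_add,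
    trace_gainAdj_mul_gainEdgeMatrix hg hvu, trace_gainAdj_mul_gainEdgeMatrix hg huw, smul_eq_mul,
    ← hweight]
  push_cast
  ring

lemma quadFormDominated_gainPathMatrix [Fintype V] (hg : IsGain G φ) {v u w : V}
    (hvu : G.Adj v u) (huw : G.Adj u w) (hvw : v ≠ w) :
    (gainPathMatrix φ v u w).QuadFormDominated {v, u, w} := by
  intro x
  rw [sum_insert (by simp [hvu.ne, hvw]), sum_pair huw.ne, gainPathMatrix, smul_mulVec,
    dotProduct_smul, smul_eq_mul, norm_mul, norm_inv, Complex.norm_real,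
    Real.norm_of_nonneg (Real.sqrt_nonneg 2), inv_mul_le_iff₀ (by positivity)]
  calc ‖star x ⬝ᵥ (gainEdgeMatrix φ s(v, u) + gainEdgeMatrix φ s(u, w)) *ᵥ x‖
      ≤ 2 * ‖x v‖ * ‖x u‖ + 2 * ‖x u‖ * ‖x w‖ := by
        rw [add_mulVec, dotProduct_add]
        exact (norm_add_le _ _).trans (add_le_add (norm_quadForm_gainEdgeMatrix_le hg hvu x)
          (norm_quadForm_gainEdgeMatrix_le hg huw x))
    _ ≤ √2 * (‖x v‖ ^ 2 + (‖x u‖ ^ 2 + ‖x w‖ ^ 2)) := by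
        linarith [two_mul_add_mul_le_sqrt_two_mul ‖x v‖ ‖x u‖ ‖x w‖]

end GainGraph

section Matching

variable {G : SimpleGraph V} {M N : Finset (Sym2 V)}

lemma IsGraphMatching.subset (hM : IsGraphMatching G M) (hNM : N ⊆ M) : IsGraphMatching G N :=
  ⟨(coe_subset.mpr hNM).trans hM.1, fun e he f hf => hM.2 e (hNM he) f (hNM hf)⟩

lemma IsGraphMatching.insert [DecidableEq V] (hM : IsGraphMatching G M) {v u : V}
    (h : G.Adj v u) (hv : ∀ e ∈ M, v ∉ e) (hu : ∀ e ∈ M, u ∉ e) :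
    IsGraphMatching G (insert s(v, u) M) := by
  refine ⟨by simpa [Set.insert_subset_iff] using ⟨h, hM.1⟩, ?_⟩
  have hfree : ∀ f ∈ M, ∀ z ∈ s(v, u), z ∉ f := by
    rintro f hf z hz
    rcases Sym2.mem_iff.mp hz with rfl | rfl
    exacts [hv f hf, hu f hf]
  intro e he f hf hef z hze hzf
  rcases mem_insert.mp he with rfl | he <;> rcases mem_insert.mp hf with rfl | hf
  · exact hef rfl
  · exact hfree f hf z hze hzf
  · exact hfree e he z hzf hze
  · exact hM.2 e he f hf hef z hze hzf

lemma IsGraphMatching.pairwiseDisjoint_toFinset [DecidableEq V] (hM : IsGraphMatching G M) :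
    (M : Set (Sym2 V)).PairwiseDisjoint Sym2.toFinset := by
  intro e he f hf hef
  rw [Function.onFun, disjoint_left]
  intro z hze hzf
  exact hM.2 e he f hf hef z (Sym2.mem_toFinset.mp hze) (Sym2.mem_toFinset.mp hzf)

variable [Fintype V]

lemma bddAbove_card_isGraphMatching (G : SimpleGraph V) :
    BddAbove {n | ∃ M : Finset (Sym2 V), IsGraphMatching G M ∧ M.card = n} := by
  classical
  refine ⟨Fintype.card (Sym2 V), ?_⟩
  rintro _ ⟨M, -, rfl⟩
  exact card_le_univ M

lemma IsGraphMatching.card_le_matchingNumber (hM : IsGraphMatching G M) :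
    M.card ≤ matchingNumber G :=
  le_csSup (bddAbove_card_isGraphMatching G) ⟨M, hM, rfl⟩

lemma exists_isGraphMatching_card_eq_matchingNumber (G : SimpleGraph V) :
    ∃ M : Finset (Sym2 V), IsGraphMatching G M ∧ M.card = matchingNumber G := by
  refine Nat.sSup_mem ?_ (bddAbove_card_isGraphMatching G)
  exact ⟨0, ∅, ⟨by simp, by simp⟩, rfl⟩

lemma IsGraphMatching.exists_mem_of_adj_of_card_eq_matchingNumber [DecidableEq V]
    (hM : IsGraphMatching G M) (hmax : M.card = matchingNumber G) {v u : V}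
    (hv : ∀ e ∈ M, v ∉ e) (h : G.Adj v u) : ∃ e ∈ M, u ∈ e := by
  by_contra! hu
  have hvu : s(v, u) ∉ M := fun hmem => hv _ hmem (Sym2.mem_mk_left v u)
  have hle := (hM.insert h hv hu).card_le_matchingNumber
  rw [card_insert_of_notMem hvu] at hle
  omega

end Matching

theorem two_mul_card_add_two_mul_sqrt_two_le_gainEnergy [Fintype V] [DecidableEq V]
    {G : SimpleGraph V} {φ : V → V → ℂ} (hg : IsGain G φ) {E : Finset (Sym2 V)}
    (hE : IsGraphMatching G E) {v u w : V} (hvu : G.Adj v u) (huw : G.Adj u w) (hvw : v ≠ w)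
    (hdisj : Disjoint {v, u, w} (E.biUnion Sym2.toFinset)) :
    2 * E.card + 2 * √2 ≤ gainEnergy G φ hg := by
  set B := gainPathMatrix φ v u w + ∑ e ∈ E, gainEdgeMatrix φ e
  have hB : B.QuadFormDominated univ :=
    ((quadFormDominated_gainPathMatrix hg hvu huw hvw).add
      (QuadFormDominated.sum (fun e he => quadFormDominated_gainEdgeMatrix hg (hE.1 he))
        hE.pairwiseDisjoint_toFinset) hdisj).mono (subset_univ _)
  have htrace : (gainAdj G φ * B).trace = ((2 * E.card + 2 * √2 : ℝ) : ℂ) := by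
    rw [mul_add, trace_add, mul_sum, trace_sum, trace_gainAdj_mul_gainPathMatrix hg hvu huw,
      sum_congr rfl fun e he => trace_gainAdj_mul_gainEdgeMatrix hg (hE.1 he)]
    push_cast
    simp only [sum_const, nsmul_eq_mul]
    ring
  simpa [htrace, gainEnergy] using hg.isHermitian.re_trace_mul_le_sum_abs_eigenvalues hB

/-- if the underlying graph has no isolated vertices and the energy equals
twice the matching number, then the underlying graph has a perfect matching. -/
theorem exists_perfect_matching_of_gainEnergy_eq [Fintype V] [DecidableEq V]
    (G : SimpleGraph V) (φ : V → V → ℂ) (hg : IsGain G φ)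
    (hiso : ∀ v : V, ∃ w : V, G.Adj v w)
    (hE : gainEnergy G φ hg = 2 * (matchingNumber G : ℝ)) :
    ∃ M : Finset (Sym2 V), IsGraphMatching G M ∧ ∀ v : V, ∃ e ∈ M, v ∈ e := by
  obtain ⟨M, hM, hmax⟩ := exists_isGraphMatching_card_eq_matchingNumber G
  refine ⟨M, hM, ?_⟩
  by_contra! ⟨v, hv⟩
  obtain ⟨u, hvu⟩ := hiso v
  obtain ⟨e, he, hue⟩ := hM.exists_mem_of_adj_of_card_eq_matchingNumber hmax hv hvu
  obtain ⟨w, rfl⟩ := Sym2.mem_iff_exists.mp hue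
  have hvw : v ≠ w := fun hvw => hv _ he (hvw ▸ Sym2.mem_mk_right u w)
  have hdisj : Disjoint {v, u, w} ((M.erase s(u, w)).biUnion Sym2.toFinset) := by
    simp only [disjoint_left, mem_insert, mem_singleton, mem_biUnion, Sym2.mem_toFinset,
      not_exists, not_and]
    rintro z (rfl | rfl | rfl) f hf
    · exact hv f (mem_of_mem_erase hf)
    all_goals exact hM.2 _ he f (mem_of_mem_erase hf) (ne_of_mem_erase hf).symm _ (by simp)
  have hbound := two_mul_card_add_two_mul_sqrt_two_le_gainEnergy hg
    (hM.subset (erase_subset _ _)) hvu (hM.1 he) hvw hdisj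
  rw [hE, ← hmax, ← card_erase_add_one he] at hbound
  push_cast at hbound
  linarith [Real.one_lt_sqrt_two]
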